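/- arXiv:2402.12316 — 3 statements merged into one kernel-verified Lean document; each statement's English description precedes it below -/
import Mathlib

section
/- If K is a nonempty compact subspace of a topological space H, then for every topological space X the map 1 × p : X × H → X × (H/K), where p : H → H/K is the quotient map collapsing K to a point, is a quotient map. -/
open Topology

section SmashDefs

variable {X Y : Type*} [TopologicalSpace X] [TopologicalSpace Y]

/-- The relation on `X × Y` collapsing the wedge `X × {y₀} ∪ {x₀} × Y` to a point. -/
def smashRel (x₀ : X) (y₀ : Y) : X × Y → X × Y → Prop :=
  fun p q => p = q ∨ ((p.1 = x₀ ∨ p.2 = y₀) ∧ (q.1 = x₀ ∨ q.2 = y₀))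

/-- The smash product `X ∧ Y` of pointed spaces, as the quotient `(X × Y)/(X ∨ Y)`
collapsing the wedge to a point, with the quotient topology. -/
def Smash (x₀ : X) (y₀ : Y) : Type _ := Quot (smashRel x₀ y₀)

instance (x₀ : X) (y₀ : Y) : TopologicalSpace (Smash x₀ y₀) :=
  inferInstanceAs (TopologicalSpace (Quot _))

/-- Canonical projection `η : X × Y → X ∧ Y`. -/
def Smash.mk (x₀ : X) (y₀ : Y) (p : X × Y) : Smash x₀ y₀ := Quot.mk _ p

/-- Basepoint of the smash product. -/
def Smash.pt (x₀ : X) (y₀ : Y) : Smash x₀ y₀ := Smash.mk x₀ y₀ (x₀, y₀)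

end SmashDefs

section CollapseDefs

variable {A : Type*} [TopologicalSpace A]

/-- The relation collapsing a subset `S` of `A` to a single point. -/
def collapseRel (S : Set A) : A → A → Prop := fun a b => a = b ∨ (a ∈ S ∧ b ∈ S)

/-- The topological quotient `A/S` identifying all points of `S`. -/
def Collapse (S : Set A) : Type _ := Quot (collapseRel S)

instance (S : Set A) : TopologicalSpace (Collapse S) :=
  inferInstanceAs (TopologicalSpace (Quot _))

/-- The canonical projection `A → A/S`. -/
def Collapse.mk (S : Set A) (a : A) : Collapse S := Quot.mk _ a

end CollapseDefs

/-! A set `V ⊆ X × H` that is open and saturated for `1 × p` contains, around each of its points,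
a box `U × O` with `O` open and either containing `K` or disjoint from it: if `O` meets `K`, then
`V` contains all of `{x} × K`, and the tube lemma (this is where compactness of `K` enters) lets us
enlarge `O` by an open set containing `K`. Such an `O` is saturated for `p`, so `U × p(O)` is an
open neighbourhood inside the image of `V`. -/

theorem equivalence_collapseRel {A : Type*} (S : Set A) : Equivalence (collapseRel S) where
  refl _ := Or.inl rfl
  symm
    | Or.inl h => Or.inl h.symm
    | Or.inr ⟨ha, hb⟩ => Or.inr ⟨hb, ha⟩
  trans
    | Or.inl rfl, h => h
    | h, Or.inl rfl => h
    | Or.inr ⟨ha, _⟩, Or.inr ⟨_, hc⟩ => Or.inr ⟨ha, hc⟩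

namespace Collapse

variable {A : Type*} {S : Set A}

theorem mk_eq_mk_iff {a b : A} : mk S a = mk S b ↔ a = b ∨ a ∈ S ∧ b ∈ S :=
  ⟨fun h => (equivalence_collapseRel S).eqvGen_iff.mp (Quot.eqvGen_exact h), fun h => Quot.sound h⟩

theorem surjective_mk (S : Set A) : Function.Surjective (mk S) := Quot.exists_rep

theorem preimage_image_mk {B : Set A} (hSB : S ⊆ B ∨ Disjoint S B) :
    mk S ⁻¹' (mk S '' B) = B := by
  refine Set.Subset.antisymm ?_ (Set.subset_preimage_image _ _)
  rintro a ⟨b, hb, hba⟩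
  rcases mk_eq_mk_iff.mp hba with rfl | ⟨hbS, haS⟩
  · exact hb
  · rcases hSB with hSB | hSB
    · exact hSB haS
    · exact absurd hb (Set.disjoint_left.mp hSB hbS)

variable [TopologicalSpace A]

theorem isQuotientMap_mk (S : Set A) : IsQuotientMap (mk S) := isQuotientMap_quot_mk

theorem isOpen_image_mk {B : Set A} (hB : IsOpen B) (hSB : S ⊆ B ∨ Disjoint S B) :
    IsOpen (mk S '' B) := by
  rw [← (isQuotientMap_mk S).isOpen_preimage, preimage_image_mk hSB]
  exact hB

end Collapse

theorem exists_isOpen_prod_subset_of_isCompact {X H : Type*} [TopologicalSpace X]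
    [TopologicalSpace H] {K : Set H} (hK : IsCompact K) {V : Set (X × H)} (hV : IsOpen V)
    (hsat : ∀ x, ∀ k ∈ K, (x, k) ∈ V → ∀ k' ∈ K, (x, k') ∈ V) {x : X} {a : H}
    (hxa : (x, a) ∈ V) :
    ∃ U O, IsOpen U ∧ IsOpen O ∧ x ∈ U ∧ a ∈ O ∧ (K ⊆ O ∨ Disjoint K O) ∧ U ×ˢ O ⊆ V := by
  obtain ⟨U, O, hU, hO, hxU, haO, hUO⟩ := isOpen_prod_iff.mp hV x a hxa
  by_cases hKO : Disjoint K O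
  · exact ⟨U, O, hU, hO, hxU, haO, Or.inr hKO, hUO⟩
  obtain ⟨k, hkK, hkO⟩ := Set.not_disjoint_iff.mp hKO
  have hxK : {x} ×ˢ K ⊆ V := by
    rintro ⟨x', k'⟩ ⟨hx' : x' = x, hk'⟩
    rw [hx']
    exact hsat x k hkK (hUO ⟨hxU, hkO⟩) k' hk'
  obtain ⟨U', O', hU', hO', hxU', hKO', hU'O'⟩ :=
    generalized_tube_lemma isCompact_singleton hK hV hxK
  refine ⟨U ∩ U', O ∪ O', hU.inter hU', hO.union hO', ⟨hxU, hxU' rfl⟩, Or.inl haO,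
    Or.inl (hKO'.trans Set.subset_union_right), ?_⟩
  rintro ⟨x', b⟩ ⟨⟨hx'U, hx'U'⟩, hb | hb⟩
  · exact hUO ⟨hx'U, hb⟩
  · exact hU'O' ⟨hx'U', hb⟩

theorem isQuotientMap_prod_collapse_of_isCompact_general {X H : Type} [TopologicalSpace X]
    [TopologicalSpace H] (K : Set H) (hK : IsCompact K) :
    IsQuotientMap (fun p : X × H => (p.1, Collapse.mk K p.2)) := by
  set f : X × H → X × Collapse K := fun p => (p.1, Collapse.mk K p.2)
  have hf_cont : Continuous f :=
    continuous_fst.prodMk ((Collapse.isQuotientMap_mk K).continuous.comp continuous_snd)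
  refine ⟨isCoinducing_iff.mpr fun W => ⟨fun hV => ?_, (·.preimage hf_cont)⟩,
    Function.Surjective.prodMap Function.surjective_id (Collapse.surjective_mk K)⟩
  have hsat : ∀ x, ∀ k ∈ K, (x, k) ∈ f ⁻¹' W → ∀ k' ∈ K, (x, k') ∈ f ⁻¹' W :=
    fun x k hk hxk k' hk' => by
      show (x, Collapse.mk K k') ∈ W
      rwa [Collapse.mk_eq_mk_iff.mpr (Or.inr ⟨hk', hk⟩)]
  refine isOpen_iff_mem_nhds.mpr ?_
  rintro ⟨x, z⟩ hxz
  obtain ⟨a, rfl⟩ := Collapse.surjective_mk K z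
  obtain ⟨U, O, hU, hO, hxU, haO, hKO, hUO⟩ :=
    exists_isOpen_prod_subset_of_isCompact hK hV hsat hxz
  refine mem_nhds_prod_iff'.mpr ⟨U, Collapse.mk K '' O, hU, hxU,
    Collapse.isOpen_image_mk hO hKO, ⟨a, haO, rfl⟩, ?_⟩
  rintro ⟨x', _⟩ ⟨hx'U, b, hbO, rfl⟩
  exact hUO (Set.mk_mem_prod hx'U hbO)

/-- If `K` is a nonempty compact subspace of `H`, then for every space `X` the map
`1 × p : X × H → X × (H/K)` is a quotient map. -/
theorem isQuotientMap_prod_collapse_of_isCompact {X H : Type} [TopologicalSpace X]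
    [TopologicalSpace H] (K : Set H) (hK : IsCompact K) (hne : K.Nonempty) :
    IsQuotientMap (fun p : X × H => (p.1, Collapse.mk K p.2)) :=
  isQuotientMap_prod_collapse_of_isCompact_general K hK
end

section
/- Let X, Y, Z be pointed topological spaces such that the underlying spaces of X and Z are exponentiable in Top (i.e., the functor − × X and − × Z preserve quotient maps, e.g. X and Z locally compact). Then the canonical set-theoretic associator κ : X ∧ (Y ∧ Z) → (X ∧ Y) ∧ Z, κ(x ∧ (y ∧ z)) = (x ∧ y) ∧ z, is a pointed homeomorphism. -/
open Topology

/-- A topological space `A` is exponentiable (for the cartesian product) iff the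
functor `− × A` preserves quotient maps. -/
def IsExponentiable (A : Type) [TopologicalSpace A] : Prop :=
  ∀ (B C : Type) (_ : TopologicalSpace B) (_ : TopologicalSpace C) (f : B → C),
    IsQuotientMap f → IsQuotientMap (fun p : B × A => (f p.1, p.2))

/-!
Both iterated smash products are quotients of `X × Y × Z` collapsing the triples with a
basepoint coordinate, so the associator and its inverse are well defined and mutually inverse
on representatives. Continuity is the real issue: `X ∧ (Y ∧ Z)` carries the quotient topology
of `X × (Y × Z)` only if `X × −` preserves the quotient map `Y × Z → Y ∧ Z`, which is what
exponentiability of `X` provides; symmetrically, exponentiability of `Z` makes the inverse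
continuous.
-/

section Exponentiable

variable {A B C : Type} [TopologicalSpace A] [TopologicalSpace B] [TopologicalSpace C]

theorem IsExponentiable.isQuotientMap_prodMap_id (hA : IsExponentiable A) {f : B → C}
    (hf : IsQuotientMap f) : IsQuotientMap (Prod.map f id : B × A → C × A) :=
  hA B C _ _ f hf

theorem IsExponentiable.isQuotientMap_id_prodMap (hA : IsExponentiable A) {f : B → C}
    (hf : IsQuotientMap f) : IsQuotientMap (Prod.map id f : A × B → A × C) :=
  (Homeomorph.prodComm C A).isQuotientMap.comp <|
    (hA.isQuotientMap_prodMap_id hf).comp (Homeomorph.prodComm A B).isQuotientMap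

end Exponentiable

namespace Smash

section Lift

variable {X Y W : Type*} {x₀ : X} {y₀ : Y}

theorem mk_eq_pt {p : X × Y} (h : p.1 = x₀ ∨ p.2 = y₀) : Smash.mk x₀ y₀ p = Smash.pt x₀ y₀ :=
  Quot.sound (Or.inr ⟨h, Or.inl rfl⟩)

@[simp]
theorem mk_base_left (y : Y) : Smash.mk x₀ y₀ (x₀, y) = Smash.pt x₀ y₀ :=
  mk_eq_pt (Or.inl rfl)

@[simp]
theorem mk_base_right (x : X) : Smash.mk x₀ y₀ (x, y₀) = Smash.pt x₀ y₀ :=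
  mk_eq_pt (Or.inr rfl)

@[elab_as_elim]
theorem ind {P : Smash x₀ y₀ → Prop} (h : ∀ x y, P (Smash.mk x₀ y₀ (x, y))) (w : Smash x₀ y₀) :
    P w :=
  Quot.ind (fun p => h p.1 p.2) w

def lift (f : X × Y → W) (hf : ∀ p : X × Y, p.1 = x₀ ∨ p.2 = y₀ → f p = f (x₀, y₀)) :
    Smash x₀ y₀ → W :=
  Quot.lift f <| by
    rintro p q (rfl | ⟨hp, hq⟩)
    · rfl
    · rw [hf p hp, hf q hq]

@[simp]
theorem lift_mk (f : X × Y → W) (hf : ∀ p : X × Y, p.1 = x₀ ∨ p.2 = y₀ → f p = f (x₀, y₀))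
    (p : X × Y) : lift f hf (Smash.mk x₀ y₀ p) = f p :=
  rfl

@[simp]
theorem lift_pt (f : X × Y → W) (hf : ∀ p : X × Y, p.1 = x₀ ∨ p.2 = y₀ → f p = f (x₀, y₀)) :
    lift f hf (Smash.pt x₀ y₀) = f (x₀, y₀) :=
  rfl

end Lift

section Topology

variable {X Y : Type*} [TopologicalSpace X] [TopologicalSpace Y] (x₀ : X) (y₀ : Y)

theorem isQuotientMap_mk : IsQuotientMap (Smash.mk x₀ y₀) :=
  isQuotientMap_quot_mk

@[fun_prop]
theorem continuous_mk : Continuous (Smash.mk x₀ y₀) :=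
  continuous_quot_mk

end Topology

section Assoc

variable {X Y Z : Type} (x₀ : X) (y₀ : Y) (z₀ : Z)

def assoc : Smash x₀ (Smash.pt y₀ z₀) → Smash (Smash.pt x₀ y₀) z₀ :=
  lift (fun p => lift (fun q => Smash.mk _ _ (Smash.mk x₀ y₀ (p.1, q.1), q.2))
      (by rintro ⟨y, z⟩ (rfl | rfl) <;> simp) p.2)
    (by
      rintro ⟨x, w⟩ (rfl | rfl)
      · induction w using Smash.ind with
        | h y z => simp
      · simp)

def assocSymm : Smash (Smash.pt x₀ y₀) z₀ → Smash x₀ (Smash.pt y₀ z₀) :=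
  lift (fun p => lift (fun q => Smash.mk _ _ (q.1, Smash.mk y₀ z₀ (q.2, p.2)))
      (by rintro ⟨x, y⟩ (rfl | rfl) <;> simp) p.1)
    (by
      rintro ⟨w, z⟩ (rfl | rfl)
      · simp
      · induction w using Smash.ind with
        | h x y => simp)

def assocEquiv : Smash x₀ (Smash.pt y₀ z₀) ≃ Smash (Smash.pt x₀ y₀) z₀ where
  toFun := assoc x₀ y₀ z₀
  invFun := assocSymm x₀ y₀ z₀
  left_inv w := by
    induction w using Smash.ind with
    | h x w => induction w using Smash.ind with
      | h y z => rfl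
  right_inv w := by
    induction w using Smash.ind with
    | h w z => induction w using Smash.ind with
      | h x y => rfl

variable [TopologicalSpace X] [TopologicalSpace Y] [TopologicalSpace Z]

def assocHomeomorph (hX : IsExponentiable X) (hZ : IsExponentiable Z) :
    Smash x₀ (Smash.pt y₀ z₀) ≃ₜ Smash (Smash.pt x₀ y₀) z₀ where
  toEquiv := assocEquiv x₀ y₀ z₀
  continuous_toFun :=
    ((isQuotientMap_mk _ _).comp (hX.isQuotientMap_id_prodMap (isQuotientMap_mk y₀ z₀))
      ).continuous_iff.mpr (by fun_prop :
        Continuous fun p : X × (Y × Z) => Smash.mk _ z₀ (Smash.mk x₀ y₀ (p.1, p.2.1), p.2.2))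
  continuous_invFun :=
    ((isQuotientMap_mk _ _).comp (hZ.isQuotientMap_prodMap_id (isQuotientMap_mk x₀ y₀))
      ).continuous_iff.mpr (by fun_prop :
        Continuous fun p : (X × Y) × Z => Smash.mk x₀ _ (p.1.1, Smash.mk y₀ z₀ (p.1.2, p.2)))

end Assoc

end Smash

/-- If `X` and `Z` are exponentiable, the triple `(X, Y, Z)` is (regularly) associative:
the canonical associator `κ : X ∧ (Y ∧ Z) → (X ∧ Y) ∧ Z` is a pointed homeomorphism. -/
theorem smash_assoc_of_exponentiable {X Y Z : Type} [TopologicalSpace X] [TopologicalSpace Y]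
    [TopologicalSpace Z] (x₀ : X) (y₀ : Y) (z₀ : Z)
    (hX : IsExponentiable X) (hZ : IsExponentiable Z) :
    ∃ h : Smash x₀ (Smash.pt y₀ z₀) ≃ₜ Smash (Smash.pt x₀ y₀) z₀,
      h (Smash.pt x₀ (Smash.pt y₀ z₀)) = Smash.pt (Smash.pt x₀ y₀) z₀ ∧
      ∀ (x : X) (y : Y) (z : Z),
        h (Smash.mk _ _ (x, Smash.mk y₀ z₀ (y, z))) =
          Smash.mk _ _ (Smash.mk x₀ y₀ (x, y), z) := by
  exact ⟨Smash.assocHomeomorph x₀ y₀ z₀ hX hZ, rfl, fun _ _ _ => rfl⟩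
end

section
/- If Y and Z are compact exponentiable pointed spaces then Y ∧ Z is exponentiable, i.e., the functor − ∧ (Y ∧ Z) on pointed spaces has a right adjoint. -/
open Topology

/-!
For a quotient map `f : B → C`, the composites `B × (Y × Z) → C × (Y × Z) → C × (Y ∧ Z)` and
`B × (Y × Z) → B × (Y ∧ Z) → C × (Y ∧ Z)` agree. The first is a quotient map because `Y × Z` is
exponentiable and `id × η` is a quotient map for the projection `η : Y × Z → Y ∧ Z`; hence so is
the last factor `f × id` of the second. That `id × η` is a quotient map comes from `η` collapsing
the compact wedge `Y ∨ Z` to a point: by the tube lemma, an open set of `C × (Y × Z)` saturated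
for the collapse contains around each of its points a product neighbourhood whose second factor
is itself saturated.
-/

open Set

section CollapseCompact

variable {X Q C : Type*} {K : Set X} {q : X → Q}

theorem preimage_image_eq_of_collapse (hq : ∀ a b, q a = q b ↔ a = b ∨ a ∈ K ∧ b ∈ K)
    {V : Set X} (hV : Disjoint V K ∨ K ⊆ V) : q ⁻¹' (q '' V) = V := by
  refine (subset_preimage_image q V).antisymm' ?_
  rintro a ⟨b, hb, hba⟩
  rcases (hq b a).1 hba with rfl | ⟨hbK, haK⟩
  · exact hb
  · rcases hV with hVK | hKV
    · exact absurd hbK (hVK.notMem_of_mem_left hb)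
    · exact hKV haK

variable [TopologicalSpace X] [TopologicalSpace C]

theorem exists_open_prod_subset_of_collapse (hK : IsCompact K)
    (hq : ∀ a b, q a = q b ↔ a = b ∨ a ∈ K ∧ b ∈ K) {U : Set (C × Q)}
    (hU : IsOpen (Prod.map id q ⁻¹' U)) {c : C} {k : X} (hck : (c, q k) ∈ U) :
    ∃ (N : Set C) (V : Set X), IsOpen N ∧ IsOpen V ∧ c ∈ N ∧ k ∈ V ∧
      N ×ˢ (q '' V) ⊆ U ∧ (Disjoint V K ∨ K ⊆ V) := by
  obtain ⟨N₀, V₀, hN₀, hV₀, hcN₀, hkV₀, hbox⟩ := isOpen_prod_iff.mp hU c k hck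
  have hbox' : N₀ ×ˢ (q '' V₀) ⊆ U := by
    rintro ⟨c', _⟩ ⟨hc', a, ha, rfl⟩
    exact hbox (mk_mem_prod hc' ha)
  by_cases hV₀K : Disjoint V₀ K
  · exact ⟨N₀, V₀, hN₀, hV₀, hcN₀, hkV₀, hbox', Or.inl hV₀K⟩
  obtain ⟨w, hwV₀, hwK⟩ := not_disjoint_iff.mp hV₀K
  -- `q` is constant on `K`, so the whole fibre `{c} × K` lies in the saturated open set.
  have hfibre : {c} ×ˢ K ⊆ Prod.map id q ⁻¹' U := by
    rintro ⟨_, a⟩ ⟨rfl, haK⟩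
    have hwa : q w = q a := (hq w a).2 (Or.inr ⟨hwK, haK⟩)
    simpa [hwa] using hbox (mk_mem_prod hcN₀ hwV₀)
  obtain ⟨N₁, O, hN₁, hO, hcN₁, hKO, htube⟩ :=
    generalized_tube_lemma isCompact_singleton hK hU hfibre
  refine ⟨N₀ ∩ N₁, V₀ ∪ O, hN₀.inter hN₁, hV₀.union hO, ⟨hcN₀, hcN₁ rfl⟩, Or.inl hkV₀, ?_,
    Or.inr (hKO.trans subset_union_right)⟩
  rintro ⟨c', _⟩ ⟨⟨hc'₀, hc'₁⟩, a, ha | ha, rfl⟩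
  · exact hbox (mk_mem_prod hc'₀ ha)
  · exact htube (mk_mem_prod hc'₁ ha)

variable [TopologicalSpace Q]

theorem isQuotientMap_prodMap_id_of_collapse (hK : IsCompact K)
    (hq : ∀ a b, q a = q b ↔ a = b ∨ a ∈ K ∧ b ∈ K) (hquot : IsQuotientMap q) :
    IsQuotientMap (Prod.map (id : C → C) q) := by
  refine ⟨.of_isOpen_preimage_iff_isOpen fun U => ⟨fun hU => ?_, fun hU => ?_⟩,
    Function.surjective_id.prodMap hquot.surjective⟩
  · refine isOpen_iff_forall_mem_open.mpr ?_
    rintro ⟨c, s⟩ hcs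
    obtain ⟨k, rfl⟩ := hquot.surjective s
    obtain ⟨N, V, hN, hV, hcN, hkV, hNV, hVsat⟩ :=
      exists_open_prod_subset_of_collapse hK hq hU hcs
    have hqV : IsOpen (q '' V) := by
      rw [← hquot.isOpen_preimage, preimage_image_eq_of_collapse hq hVsat]
      exact hV
    exact ⟨N ×ˢ (q '' V), hNV, hN.prod hqV, hcN, k, hkV, rfl⟩
  · exact hU.preimage (continuous_id.prodMap hquot.continuous)

end CollapseCompact

namespace Smash

variable {Y Z : Type*} (y₀ : Y) (z₀ : Z)

def wedge : Set (Y × Z) := {p | p.1 = y₀ ∨ p.2 = z₀}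

theorem smashRel_equivalence : Equivalence (smashRel y₀ z₀) where
  refl _ := Or.inl rfl
  symm := by
    rintro _ _ (rfl | ⟨hp, hq⟩)
    exacts [Or.inl rfl, Or.inr ⟨hq, hp⟩]
  trans := by
    rintro _ _ _ (rfl | ⟨hp, hq⟩) h
    · exact h
    · rcases h with rfl | ⟨-, hr⟩
      exacts [Or.inr ⟨hp, hq⟩, Or.inr ⟨hp, hr⟩]

theorem mk_eq_mk_iff (p p' : Y × Z) :
    mk y₀ z₀ p = mk y₀ z₀ p' ↔ p = p' ∨ p ∈ wedge y₀ z₀ ∧ p' ∈ wedge y₀ z₀ :=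
  (smashRel_equivalence y₀ z₀).quot_mk_eq_iff p p'

variable [TopologicalSpace Y] [TopologicalSpace Z]

theorem isCompact_wedge [CompactSpace Y] [CompactSpace Z] : IsCompact (wedge y₀ z₀) := by
  have : wedge y₀ z₀ = {y₀} ×ˢ univ ∪ univ ×ˢ {z₀} := by ext; simp [wedge]
  rw [this]
  exact (isCompact_singleton.prod isCompact_univ).union (isCompact_univ.prod isCompact_singleton)

theorem isQuotientMap_mk_s8 : IsQuotientMap (mk y₀ z₀) :=
  isQuotientMap_quot_mk

theorem isQuotientMap_prodMap_id_mk [CompactSpace Y] [CompactSpace Z] (C : Type*)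
    [TopologicalSpace C] : IsQuotientMap (Prod.map (id : C → C) (mk y₀ z₀)) :=
  isQuotientMap_prodMap_id_of_collapse (isCompact_wedge y₀ z₀) (mk_eq_mk_iff y₀ z₀)
    (isQuotientMap_mk_s8 y₀ z₀)

end Smash

namespace IsExponentiable

variable {Y Z : Type} [TopologicalSpace Y] [TopologicalSpace Z]

theorem prod (hY : IsExponentiable Y) (hZ : IsExponentiable Z) : IsExponentiable (Y × Z) :=
  fun B C _ _ f hf =>
    (Homeomorph.prodAssoc C Y Z).isQuotientMap.comp <|
      (hZ _ _ _ _ _ (hY B C _ _ f hf)).comp (Homeomorph.prodAssoc B Y Z).symm.isQuotientMap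

theorem of_isQuotientMap_prodMap_id (hY : IsExponentiable Y) {q : Y → Z}
    (hq : ∀ (C : Type) [TopologicalSpace C], IsQuotientMap (Prod.map (id : C → C) q)) :
    IsExponentiable Z := by
  intro B C _ _ f hf
  -- definitionally `(id × q) ∘ (f × id)`
  have hsquare : IsQuotientMap ((fun p : B × Z => (f p.1, p.2)) ∘ Prod.map (id : B → B) q) :=
    (hq C).comp (hY B C _ _ f hf)
  exact hsquare.of_comp_of_isCoinducing (hq B).isCoinducing

end IsExponentiable

/-- If `Y` and `Z` are compact exponentiable pointed spaces, then `Y ∧ Z` is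
exponentiable (equivalently, by Cagliari's theorem, `− ∧ (Y ∧ Z)` has a right
adjoint on pointed spaces). -/
theorem smash_exponentiable_of_compact_exponentiable {Y Z : Type} [TopologicalSpace Y]
    [TopologicalSpace Z] (y₀ : Y) (z₀ : Z)
    (hYc : CompactSpace Y) (hZc : CompactSpace Z)
    (hY : IsExponentiable Y) (hZ : IsExponentiable Z) :
    IsExponentiable (Smash y₀ z₀) :=
  (hY.prod hZ).of_isQuotientMap_prodMap_id fun C _ => Smash.isQuotientMap_prodMap_id_mk y₀ z₀ C
end
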